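/- (Theorem 1 of the paper.) Let θ : ZMod n → ℝ be the occupied angles of the pursuers, with θ i > 0 for all i and 2π − ∑ᵢ θ i ≤ 0. Let ε : ℝ → (ZMod n → ℝ) be differentiable with ε'(t) = −(M *ᵥ ε(t)) for every t and with ∑ᵢ εᵢ(0) = 2π − ∑ᵢ θ i. Then the group occupied angle θ_G(t) = ∑ᵢ θ i + ∑ᵢ min(εᵢ(t), 0) tends to 2π as t → ∞; i.e., the encirclement algorithm traps the evader in the union of the pursuers' capture domains. -/

import Mathlib

/-!
The encirclement algorithm is a Laplacian flow on the cycle. The matrix `M` has zero column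
sums, so `∑ εᵢ` is conserved, and it annihilates constant vectors; hence `y = ε - m • 1` with
`m = (2π - ∑ θᵢ) / n` solves the same equation and stays in the hyperplane `∑ yᵢ = 0`. There
the energy `y ⬝ᵥ M y = ∑ kᵢ₊₁ (yᵢ₊₁ - yᵢ)²` vanishes only at `0`, so by compactness it dominates
`c (y ⬝ᵥ y)` for some `c > 0`, and `y ⬝ᵥ y` decays like `e^{-2ct}`. Every `εᵢ` therefore tends to
`m ≤ 0`, and the group occupied angle tends to `∑ θᵢ + n m = 2π`.
-/

open Matrix Filter Real

/-- The weighted cycle Laplacian matrix of the encirclement algorithm: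
`M i i = k i + k (i+1)`, `M i (i-1) = -k i`, `M i (i+1) = -k (i+1)`, and `0` otherwise. -/
def cycLap (n : ℕ) (k : ZMod n → ℝ) : Matrix (ZMod n) (ZMod n) ℝ :=
  Matrix.of fun i j =>
    if j = i then k i + k (i + 1)
    else if j = i - 1 then -k i
    else if j = i + 1 then -k (i + 1)
    else 0

theorem le_mul_exp_of_hasDerivAt_le_neg_mul {f f' : ℝ → ℝ} {a : ℝ}
    (hf : ∀ t, HasDerivAt f (f' t) t) (hf' : ∀ t, f' t ≤ -a * f t) {t : ℝ} (ht : 0 ≤ t) :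
    f t ≤ f 0 * exp (-a * t) := by
  have := le_gronwallBound_of_liminf_deriv_right_le (b := t) (K := -a) (ε := 0)
    (fun x _ => (hf x).continuousAt.continuousWithinAt)
    (fun x _ _ hr => (hf x).hasDerivWithinAt.liminf_right_slope_le hr) le_rfl
    (fun x _ => by linarith [hf' x]) t ⟨ht, le_rfl⟩
  simpa [gronwallBound_ε0] using this

theorem tendsto_zero_of_hasDerivAt_le_neg_mul {f f' : ℝ → ℝ} {a : ℝ} (ha : 0 < a)
    (hf : ∀ t, HasDerivAt f (f' t) t) (hf' : ∀ t, f' t ≤ -a * f t) (hf0 : ∀ t, 0 ≤ f t) :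
    Tendsto f atTop (nhds 0) := by
  have hexp : Tendsto (fun t => f 0 * exp (-a * t)) atTop (nhds 0) := by
    simpa using (tendsto_exp_atBot.comp
      (tendsto_id.const_mul_atTop_of_neg (neg_neg_of_pos ha))).const_mul (f 0)
  exact squeeze_zero' (.of_forall hf0)
    ((eventually_ge_atTop 0).mono fun t ht => le_mul_exp_of_hasDerivAt_le_neg_mul hf hf' ht) hexp

theorem exists_pos_mul_norm_sq_le {E : Type*} [NormedAddCommGroup E] [NormedSpace ℝ E]
    [FiniteDimensional ℝ E] [Nontrivial E] {q : E → ℝ} (hq : Continuous q)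
    (hsmul : ∀ (a : ℝ) x, q (a • x) = a ^ 2 * q x) (hpos : ∀ x, x ≠ 0 → 0 < q x) :
    ∃ c > 0, ∀ x, c * ‖x‖ ^ 2 ≤ q x := by
  obtain ⟨x₀, hx₀, hmin⟩ := (isCompact_sphere (0 : E) 1).exists_isMinOn
    (NormedSpace.sphere_nonempty.mpr zero_le_one) hq.continuousOn
  refine ⟨q x₀, hpos x₀ (ne_zero_of_mem_unit_sphere ⟨x₀, hx₀⟩), fun x => ?_⟩
  rcases eq_or_ne x 0 with rfl | hx
  · simpa using (hsmul 0 0).ge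
  have hnx : 0 < ‖x‖ := norm_pos_iff.mpr hx
  have hunit : ‖x‖⁻¹ • x ∈ Metric.sphere (0 : E) 1 := by
    simp [norm_smul, hnx.ne']
  calc q x₀ * ‖x‖ ^ 2 ≤ q (‖x‖⁻¹ • x) * ‖x‖ ^ 2 := by gcongr; exact hmin hunit
    _ = q x := by rw [hsmul]; field_simp

theorem dotProduct_self_le_card_mul_norm_sq {ι : Type*} [Fintype ι] (x : ι → ℝ) :
    x ⬝ᵥ x ≤ Fintype.card ι * ‖x‖ ^ 2 := by
  calc x ⬝ᵥ x = ∑ i, ‖x i‖ ^ 2 := by simp [dotProduct, sq]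
    _ ≤ ∑ _i : ι, ‖x‖ ^ 2 := by gcongr with i; exact norm_le_pi_norm x i
    _ = Fintype.card ι * ‖x‖ ^ 2 := by simp

namespace ZMod

variable {n : ℕ}

theorem natCast_ne_zero_of_lt {m : ℕ} (h0 : 0 < m) (hm : m < n) : (m : ZMod n) ≠ 0 := by
  rw [Ne, ZMod.natCast_eq_zero_iff]
  exact fun h => absurd (Nat.le_of_dvd h0 h) (by omega)

theorem apply_eq_of_forall_apply_add_one_eq [NeZero n] {α : Type*} {x : ZMod n → α}
    (h : ∀ i, x (i + 1) = x i) (i j : ZMod n) : x i = x j := by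
  have h0 : ∀ m : ℕ, x m = x 0 := fun m => by
    induction m with
    | zero => simp
    | succ m ih => rw [Nat.cast_succ, h, ih]
  rw [← ZMod.natCast_zmod_val i, ← ZMod.natCast_zmod_val j, h0, h0]

theorem sum_comp_add_one [NeZero n] {M : Type*} [AddCommMonoid M] (f : ZMod n → M) :
    ∑ i, f (i + 1) = ∑ i, f i :=
  Equiv.sum_comp (Equiv.addRight 1) f

end ZMod

section CycLap

variable {n : ℕ} [NeZero n] {k : ZMod n → ℝ}

theorem cycLap_mulVec_apply (hn : 3 ≤ n) (x : ZMod n → ℝ) (i : ZMod n) :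
    (cycLap n k *ᵥ x) i = k i * (x i - x (i - 1)) + k (i + 1) * (x i - x (i + 1)) := by
  have h1 : (1 : ZMod n) ≠ 0 := by exact_mod_cast ZMod.natCast_ne_zero_of_lt one_pos (by omega)
  have h2 : (2 : ZMod n) ≠ 0 := by exact_mod_cast ZMod.natCast_ne_zero_of_lt two_pos (by omega)
  have hlo : i - 1 ≠ i := fun h => h1 (by linear_combination -h)
  have hhi : i + 1 ≠ i := fun h => h1 (by linear_combination h)
  have hlohi : i - 1 ≠ i + 1 := fun h => h2 (by linear_combination -h)
  have hsupp : ∀ j ∉ ({i, i - 1, i + 1} : Finset (ZMod n)), cycLap n k i j * x j = 0 := by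
    intro j hj
    simp only [Finset.mem_insert, Finset.mem_singleton, not_or] at hj
    simp [cycLap, hj.1, hj.2.1, hj.2.2]
  simp only [mulVec, dotProduct]
  rw [← Finset.sum_subset (Finset.subset_univ _) (fun j _ => hsupp j),
    Finset.sum_insert (by simp [hlo.symm, hhi.symm]), Finset.sum_pair hlohi]
  simp [cycLap, hlo, hhi, hlohi.symm]
  ring

theorem sum_cycLap_mulVec (hn : 3 ≤ n) (x : ZMod n → ℝ) : ∑ i, (cycLap n k *ᵥ x) i = 0 := by
  calc ∑ i, (cycLap n k *ᵥ x) i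
      = ∑ i, k i * (x i - x (i - 1)) + ∑ i, k (i + 1) * (x i - x (i + 1)) := by
        simp only [cycLap_mulVec_apply hn, Finset.sum_add_distrib]
    _ = ∑ i, k (i + 1) * (x (i + 1) - x i) + ∑ i, k (i + 1) * (x i - x (i + 1)) := by
        rw [← ZMod.sum_comp_add_one (fun i => k i * (x i - x (i - 1)))]
        simp only [add_sub_cancel_right]
    _ = 0 := by
        rw [← Finset.sum_add_distrib]
        exact Finset.sum_eq_zero fun i _ => by ring

theorem cycLap_mulVec_const (hn : 3 ≤ n) (c : ℝ) : cycLap n k *ᵥ (fun _ => c) = 0 := by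
  ext i
  simp [cycLap_mulVec_apply hn]

theorem dotProduct_cycLap_mulVec (hn : 3 ≤ n) (x : ZMod n → ℝ) :
    x ⬝ᵥ (cycLap n k *ᵥ x) = ∑ i, k (i + 1) * (x (i + 1) - x i) ^ 2 := by
  calc x ⬝ᵥ (cycLap n k *ᵥ x)
      = ∑ i, k i * x i * (x i - x (i - 1)) + ∑ i, k (i + 1) * x i * (x i - x (i + 1)) := by
        simp only [dotProduct, cycLap_mulVec_apply hn, ← Finset.sum_add_distrib]
        exact Finset.sum_congr rfl fun i _ => by ring
    _ = ∑ i, k (i + 1) * x (i + 1) * (x (i + 1) - x i)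
          + ∑ i, k (i + 1) * x i * (x i - x (i + 1)) := by
        rw [← ZMod.sum_comp_add_one (fun i => k i * x i * (x i - x (i - 1)))]
        simp only [add_sub_cancel_right]
    _ = ∑ i, k (i + 1) * (x (i + 1) - x i) ^ 2 := by
        rw [← Finset.sum_add_distrib]
        exact Finset.sum_congr rfl fun i _ => by ring

theorem dotProduct_cycLap_mulVec_nonneg (hn : 3 ≤ n) (hk : ∀ i, 0 ≤ k i) (x : ZMod n → ℝ) :
    0 ≤ x ⬝ᵥ (cycLap n k *ᵥ x) := by
  rw [dotProduct_cycLap_mulVec hn]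
  exact Finset.sum_nonneg fun i _ => mul_nonneg (hk _) (sq_nonneg _)

theorem apply_add_one_eq_of_dotProduct_cycLap_mulVec_eq_zero (hn : 3 ≤ n) (hk : ∀ i, 0 < k i)
    {x : ZMod n → ℝ} (hx : x ⬝ᵥ (cycLap n k *ᵥ x) = 0) (i : ZMod n) : x (i + 1) = x i := by
  rw [dotProduct_cycLap_mulVec hn, Finset.sum_eq_zero_iff_of_nonneg
    fun i _ => mul_nonneg (hk _).le (sq_nonneg _)] at hx
  have := hx i (Finset.mem_univ i)
  simpa [(hk _).ne', sub_eq_zero] using this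

end CycLap

theorem exists_pos_mul_dotProduct_self_le_cycLap {n : ℕ} [NeZero n] (hn : 3 ≤ n)
    {k : ZMod n → ℝ} (hk : ∀ i, 0 < k i) :
    ∃ c > 0, ∀ x : ZMod n → ℝ, ∑ i, x i = 0 → c * (x ⬝ᵥ x) ≤ x ⬝ᵥ (cycLap n k *ᵥ x) := by
  -- Adding `(∑ x)²` makes the form definite: the energy vanishes only on constant vectors.
  have hpos : ∀ x : ZMod n → ℝ, x ≠ 0 → 0 < x ⬝ᵥ (cycLap n k *ᵥ x) + (∑ i, x i) ^ 2 := by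
    intro x hx
    by_contra! hle
    have hQ0 := dotProduct_cycLap_mulVec_nonneg hn (fun i => (hk i).le) x
    have hQ : x ⬝ᵥ (cycLap n k *ᵥ x) = 0 := by nlinarith [sq_nonneg (∑ i, x i)]
    have hsum : ∑ i, x i = 0 := pow_eq_zero_iff two_ne_zero |>.mp (by nlinarith)
    have hconst := ZMod.apply_eq_of_forall_apply_add_one_eq
      (apply_add_one_eq_of_dotProduct_cycLap_mulVec_eq_zero hn hk hQ)
    have hx0 : x 0 = 0 := by simpa [hconst _ 0, ZMod.card, NeZero.ne n] using hsum
    exact hx (funext fun i => by rw [hconst i 0, hx0, Pi.zero_apply])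
  obtain ⟨c, hc, hcq⟩ := exists_pos_mul_norm_sq_le (q := fun x : ZMod n → ℝ =>
      x ⬝ᵥ (cycLap n k *ᵥ x) + (∑ i, x i) ^ 2) (by fun_prop)
    (fun a x => by simp [mulVec_smul, ← Finset.mul_sum]; ring) hpos
  have hn0 : (0 : ℝ) < n := by exact_mod_cast Nat.pos_of_ne_zero (NeZero.ne n)
  refine ⟨c / n, by positivity, fun x hx => ?_⟩
  calc c / n * (x ⬝ᵥ x) ≤ c / n * (n * ‖x‖ ^ 2) := by
        gcongr; simpa [ZMod.card] using dotProduct_self_le_card_mul_norm_sq x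
    _ = c * ‖x‖ ^ 2 := by field_simp
    _ ≤ x ⬝ᵥ (cycLap n k *ᵥ x) := by simpa [hx] using hcq x

section LinearFlow

variable {ι : Type*} [Fintype ι] {A : Matrix ι ι ℝ} {y : ℝ → ι → ℝ}

theorem sum_apply_eq_of_hasDerivAt_neg_mulVec (hA : ∀ x, ∑ i, (A *ᵥ x) i = 0)
    (hy : ∀ t, HasDerivAt y (-(A *ᵥ y t)) t) (t s : ℝ) : ∑ i, y t i = ∑ i, y s i := by
  have hderiv : ∀ t, HasDerivAt (fun t => ∑ i, y t i) 0 t := fun t => by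
    simpa [hA] using HasDerivAt.fun_sum (u := Finset.univ) fun i _ => hasDerivAt_pi.mp (hy t) i
  exact is_const_of_deriv_eq_zero (fun t => (hderiv t).differentiableAt)
    (fun t => (hderiv t).deriv) t s

theorem HasDerivAt.dotProduct_self {y' : ι → ℝ} {t : ℝ} (hy : HasDerivAt y y' t) :
    HasDerivAt (fun t => y t ⬝ᵥ y t) (2 * (y t ⬝ᵥ y')) t := by
  have : HasDerivAt (fun t => ∑ i, y t i * y t i) (∑ i, (y' i * y t i + y t i * y' i)) t :=
    HasDerivAt.fun_sum fun i _ => (hasDerivAt_pi.mp hy i).fun_mul (hasDerivAt_pi.mp hy i)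
  refine this.congr_deriv ?_
  simp only [dotProduct, Finset.mul_sum]
  exact Finset.sum_congr rfl fun i _ => by ring

theorem tendsto_dotProduct_self_of_hasDerivAt_neg_mulVec {c : ℝ} (hc : 0 < c)
    (hy : ∀ t, HasDerivAt y (-(A *ᵥ y t)) t)
    (hgap : ∀ t, c * (y t ⬝ᵥ y t) ≤ y t ⬝ᵥ (A *ᵥ y t)) :
    Tendsto (fun t => y t ⬝ᵥ y t) atTop (nhds 0) :=
  tendsto_zero_of_hasDerivAt_le_neg_mul (by positivity : 0 < 2 * c)
    (fun t => (hy t).dotProduct_self) (fun t => by simp only [dotProduct_neg]; linarith [hgap t])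
    (fun t => dotProduct_self_star_nonneg (y t))

theorem tendsto_apply_of_tendsto_dotProduct_self {l : Filter ℝ}
    (h : Tendsto (fun t => y t ⬝ᵥ y t) l (nhds 0)) (i : ι) :
    Tendsto (fun t => y t i) l (nhds 0) := by
  refine squeeze_zero_norm (fun t => ?_) (by simpa using h.sqrt)
  rw [Real.norm_eq_abs, ← Real.sqrt_sq_eq_abs]
  gcongr
  simpa [dotProduct, sq] using Finset.single_le_sum (f := fun j => y t j * y t j)
    (fun j _ => mul_self_nonneg _) (Finset.mem_univ i)

end LinearFlow

theorem encirclement_traps_evader_general (n : ℕ) (hn : 3 ≤ n) [NeZero n]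
    (k : ZMod n → ℝ) (hk : ∀ i, 0 < k i)
    (θ : ZMod n → ℝ) (hθsum : 2 * π - ∑ i, θ i ≤ 0)
    (ε : ℝ → ZMod n → ℝ) (hε : ∀ t, HasDerivAt ε (-(cycLap n k *ᵥ ε t)) t)
    (hε0 : ∑ i, ε 0 i = 2 * π - ∑ i, θ i) :
    Tendsto (fun t => ∑ i, θ i + ∑ i, min (ε t i) 0) atTop (nhds (2 * π)) := by
  set m := (2 * π - ∑ i, θ i) / n
  have hnm : n * m = 2 * π - ∑ i, θ i := mul_div_cancel₀ _ (Nat.cast_ne_zero.mpr (NeZero.ne n))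
  set y : ℝ → ZMod n → ℝ := fun t => ε t - fun _ => m
  have hy : ∀ t, HasDerivAt y (-(cycLap n k *ᵥ y t)) t := fun t => by
    simpa [y, mulVec_sub, cycLap_mulVec_const hn] using (hε t).sub_const fun _ => m
  have hy_sum : ∀ t, ∑ i, y t i = 0 := fun t => by
    simp [y, Finset.sum_sub_distrib, ZMod.card, hnm, ← hε0,
      sum_apply_eq_of_hasDerivAt_neg_mulVec (sum_cycLap_mulVec hn) hε t 0]
  obtain ⟨c, hc, hgap⟩ := exists_pos_mul_dotProduct_self_le_cycLap hn hk
  have hy_decay : Tendsto (fun t => y t ⬝ᵥ y t) atTop (nhds 0) :=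
    tendsto_dotProduct_self_of_hasDerivAt_neg_mulVec hc hy fun t => hgap _ (hy_sum t)
  have hε_lim : ∀ i, Tendsto (fun t => ε t i) atTop (nhds m) := fun i => by
    simpa [y] using (tendsto_apply_of_tendsto_dotProduct_self hy_decay i).add_const m
  have hm : m ≤ 0 := div_nonpos_of_nonpos_of_nonneg hθsum n.cast_nonneg
  have hmin_lim : Tendsto (fun t => ∑ i, min (ε t i) 0) atTop (nhds (n * m)) := by
    simpa [min_eq_left hm, ZMod.card] using
      tendsto_finsetSum Finset.univ fun i _ => (hε_lim i).min (tendsto_const_nhds (x := 0))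
  simpa [hnm] using hmin_lim.const_add (∑ i, θ i)

/-- Theorem 1 of the paper: if the occupied angles satisfy `2π - ∑ θ i ≤ 0` and the coverage
angles evolve by the encirclement algorithm `ε̇ = -Mε` with `∑ ε i (0) = 2π - ∑ θ i`, then the
group occupied angle `θ_G(t) = ∑ θ i + ∑ min (ε i (t)) 0` tends to `2π`: the encirclement
algorithm traps the evader in the union of the pursuers' capture domains. -/
theorem encirclement_traps_evader (n : ℕ) (hn : 3 ≤ n) [NeZero n]
    (k : ZMod n → ℝ) (hk : ∀ i, 0 < k i)
    (θ : ZMod n → ℝ) (hθ : ∀ i, 0 < θ i) (hθsum : 2 * π - ∑ i, θ i ≤ 0)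
    (ε : ℝ → ZMod n → ℝ) (hε : ∀ t, HasDerivAt ε (-(cycLap n k *ᵥ ε t)) t)
    (hε0 : ∑ i, ε 0 i = 2 * π - ∑ i, θ i) :
    Tendsto (fun t => ∑ i, θ i + ∑ i, min (ε t i) 0) atTop (nhds (2 * π)) :=
  encirclement_traps_evader_general n hn k hk θ hθsum ε hε hε0
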